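/- Let k ≥ 2 be an integer and let f : ℕ → ℂ be a bounded function. Then the series F_{k,k}(f;t) = Σ_{n=1}^∞ f(n)e^{2πi n^k t}/n^k converges for every t ∈ ℝ, the function F_{k,k}(f;·) is Hölder continuous with exponent 1 − 1/k (i.e., there exists C₁ > 0 with |F_{k,k}(f;s) − F_{k,k}(f;t)| ≤ C₁·|s−t|^{1−1/k} for all s, t ∈ ℝ), and the Hausdorff dimension of each of the graphs {(t, |F_{k,k}(f;t)|) : t ∈ [0,1]}, {(t, Re F_{k,k}(f;t)) : t ∈ [0,1]}, and {(t, Im F_{k,k}(f;t)) : t ∈ [0,1]} in ℝ² is at most 1 + 1/k. -/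

import Mathlib

open Filter Finset Topology

/-!
Split `F(s) - F(t)` at `N ≈ |s - t|^(-1/k)`: each of the first `N` terms moves by `O(|s - t|)`,
because the phase `n^k t` is divided by `n^k`, and the tail beyond `N` is `O(N^(1-k))`; both are
`O(|s - t|^(1-1/k))`. At scale `1/n` the graph of an `α`-Hölder function on `[0,1]` meets
`O(n^(1-α))` squares of side `1/n` in each of `O(n)` columns, so `O(n^(2-α))` such squares cover it
and its Hausdorff dimension is at most `2 - α = 1 + 1/k`. The absolute value and the real and
imaginary parts are `1`-Lipschitz, so their graphs inherit the bound.
-/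

section Series

open Complex Real

theorem norm_cexp_mul_I_sub_le (x y : ℝ) : ‖cexp (x * I) - cexp (y * I)‖ ≤ |x - y| := by
  have hsplit : cexp (x * I) - cexp (y * I) = cexp (y * I) * (cexp (I * ↑(x - y)) - 1) := by
    rw [mul_sub, ← Complex.exp_add, mul_one]
    push_cast
    ring_nf
  rw [hsplit, norm_mul, norm_exp_ofReal_mul_I, one_mul]
  exact Real.norm_exp_I_mul_ofReal_sub_one_le

theorem tsum_one_div_pow_nat_add_le {k N : ℕ} (hk : 2 ≤ k) (hN : 1 ≤ N) :
    ∑' j : ℕ, 1 / ((j + (N + 1) : ℕ) : ℝ) ^ k ≤ 1 / (N : ℝ) ^ (k - 1) := by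
  have hNR : (0 : ℝ) < N := by exact_mod_cast hN
  -- `1 / i ^ k ≤ N ^ (2 - k) / i ^ 2` for `i > N`, and the `1 / i ^ 2` telescope.
  have hterm : ∀ i : ℕ, N < i → 1 / (i : ℝ) ^ k ≤ 1 / (N : ℝ) ^ (k - 2) * ((i : ℝ) ^ 2)⁻¹ := by
    intro i hi
    have hiR : (N : ℝ) ≤ i := by exact_mod_cast hi.le
    rw [← one_div, div_mul_div_comm, one_mul, ← Nat.sub_add_cancel hk, pow_add,
      Nat.add_sub_cancel]
    have hi0 : (0 : ℝ) < i := hNR.trans_le hiR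
    gcongr
  refine Real.tsum_le_of_sum_range_le (fun _ => by positivity) fun m => ?_
  calc ∑ j ∈ range m, 1 / ((j + (N + 1) : ℕ) : ℝ) ^ k
      = ∑ i ∈ Ioc N (m + N), 1 / (i : ℝ) ^ k := by
        rw [range_eq_Ico, sum_Ico_add' (fun i : ℕ => 1 / (i : ℝ) ^ k),
          ← Ico_add_one_add_one_eq_Ioc, zero_add, add_assoc]
    _ ≤ ∑ i ∈ Ioc N (m + N), 1 / (N : ℝ) ^ (k - 2) * ((i : ℝ) ^ 2)⁻¹ :=
        sum_le_sum fun i hi => hterm i (mem_Ioc.1 hi).1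
    _ ≤ 1 / (N : ℝ) ^ (k - 2) * (N : ℝ)⁻¹ := by
        rw [← mul_sum]
        gcongr
        exact (sum_Ioc_inv_sq_le_sub (by omega) (by omega)).trans (sub_le_self _ (by positivity))
    _ = 1 / (N : ℝ) ^ (k - 1) := by
        rw [← one_div, div_mul_div_comm, one_mul, ← pow_succ, show k - 2 + 1 = k - 1 by omega]

theorem tsum_le_of_le_of_le_div_pow {d : ℕ → ℝ} {a b : ℝ} {k N : ℕ} (hk : 2 ≤ k) (hN : 1 ≤ N)
    (hd : ∀ n, 0 ≤ d n) (ha : ∀ n, d n ≤ a) (hb : ∀ n, d n ≤ b / (n : ℝ) ^ k) :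
    ∑' n, d n ≤ (N + 1) * a + b / (N : ℝ) ^ (k - 1) := by
  have hb0 : 0 ≤ b := by simpa using (hd 1).trans (hb 1)
  have hmajor : Summable fun n : ℕ => b * (1 / (n : ℝ) ^ k) :=
    (Real.summable_one_div_nat_pow.2 (by omega)).mul_left b
  have hsum : Summable d :=
    hmajor.of_nonneg_of_le hd fun n => (hb n).trans_eq (mul_one_div _ _).symm
  rw [← hsum.sum_add_tsum_nat_add (N + 1)]
  gcongr
  · simpa using sum_le_card_nsmul (range (N + 1)) d a fun n _ => ha n
  · calc ∑' j, d (j + (N + 1)) ≤ ∑' j : ℕ, b * (1 / ((j + (N + 1) : ℕ) : ℝ) ^ k) := by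
          refine Summable.tsum_le_tsum (fun j => ?_) ((summable_nat_add_iff _).2 hsum)
            ((summable_nat_add_iff (N + 1)).2 hmajor)
          exact (hb _).trans_eq (mul_one_div _ _).symm
      _ ≤ b / (N : ℝ) ^ (k - 1) := by
          rw [tsum_mul_left, ← mul_one_div]
          exact mul_le_mul_of_nonneg_left (tsum_one_div_pow_nat_add_le hk hN) hb0

-- `fkk k f` is the paper's `F_{k,k}(f; ·)`; its `n = 0` term is `0` for `k ≠ 0` since `x / 0 = 0`.
noncomputable def fkkTerm (k : ℕ) (f : ℕ → ℂ) (t : ℝ) (n : ℕ) : ℂ :=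
  f n * cexp (2 * π * I * (n : ℂ) ^ k * t) / (n : ℂ) ^ k

noncomputable def fkk (k : ℕ) (f : ℕ → ℂ) (t : ℝ) : ℂ :=
  ∑' n, fkkTerm k f t n

theorem exists_nat_cutoff {k : ℕ} (hk : 1 ≤ k) {h : ℝ} (h0 : 0 < h) (h1 : h < 1) :
    ∃ N : ℕ, 1 ≤ N ∧ (N + 1) * h ≤ 3 * h ^ (1 - 1 / (k : ℝ)) ∧
      1 / (N : ℝ) ^ (k - 1) ≤ h ^ (1 - 1 / (k : ℝ)) := by
  set x := h ^ (-(1 / (k : ℝ)))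
  have hx1 : 1 ≤ x := Real.one_le_rpow_of_pos_of_le_one_of_nonpos h0 h1.le (by simp)
  have hxh : x * h = h ^ (1 - 1 / (k : ℝ)) := by
    rw [← Real.rpow_add_one h0.ne']
    ring_nf
  have hxpow : 1 / x ^ (k - 1) = h ^ (1 - 1 / (k : ℝ)) := by
    have hk' : (k : ℝ) ≠ 0 := by positivity
    rw [← Real.rpow_natCast, ← Real.rpow_mul h0.le, Nat.cast_sub hk, one_div,
      ← Real.rpow_neg h0.le]
    congr 1
    field_simp
    ring
  refine ⟨⌈x⌉₊, Nat.one_le_ceil_iff.2 (by positivity), ?_, ?_⟩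
  · have := Nat.ceil_lt_add_one (zero_le_one.trans hx1)
    calc (⌈x⌉₊ + 1) * h ≤ (3 * x) * h := by gcongr; linarith
      _ = 3 * h ^ (1 - 1 / (k : ℝ)) := by rw [mul_assoc, hxh]
  · rw [← hxpow]
    gcongr
    exact Nat.le_ceil x

section

variable {k : ℕ} {f : ℕ → ℂ} {B : ℝ}

theorem fkkTerm_eq_div_mul_cexp (k : ℕ) (f : ℕ → ℂ) (t : ℝ) (n : ℕ) :
    fkkTerm k f t n = f n / (n : ℂ) ^ k * cexp (↑(2 * π * n ^ k * t) * I) := by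
  rw [fkkTerm]
  push_cast
  ring_nf

theorem norm_fkkTerm_le (hf : ∀ n, ‖f n‖ ≤ B) (t : ℝ) (n : ℕ) :
    ‖fkkTerm k f t n‖ ≤ B / (n : ℝ) ^ k := by
  rw [fkkTerm_eq_div_mul_cexp, norm_mul, norm_exp_ofReal_mul_I, mul_one, norm_div, norm_pow,
    Complex.norm_natCast]
  gcongr
  exact hf n

theorem norm_fkkTerm_sub_le (hf : ∀ n, ‖f n‖ ≤ B) (s t : ℝ) (n : ℕ) :
    ‖fkkTerm k f s n - fkkTerm k f t n‖ ≤ 2 * π * B * |s - t| := by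
  have hB : 0 ≤ B := (norm_nonneg _).trans (hf 0)
  rw [fkkTerm_eq_div_mul_cexp, fkkTerm_eq_div_mul_cexp, ← mul_sub, norm_mul, norm_div, norm_pow,
    Complex.norm_natCast]
  calc ‖f n‖ / (n : ℝ) ^ k * ‖_‖
      ≤ ‖f n‖ / (n : ℝ) ^ k * |2 * π * n ^ k * s - 2 * π * n ^ k * t| := by
        gcongr
        exact norm_cexp_mul_I_sub_le _ _
    _ = ‖f n‖ / (n : ℝ) ^ k * (n : ℝ) ^ k * (2 * π * |s - t|) := by
        rw [← mul_sub, abs_mul, abs_of_nonneg (by positivity)]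
        ring
    _ ≤ 2 * π * B * |s - t| := by
        rcases eq_or_ne ((n : ℝ) ^ k) 0 with h0 | h0
        · rw [h0, mul_zero, zero_mul]
          positivity
        · rw [div_mul_cancel₀ _ h0, mul_comm (2 * π) B, mul_assoc B]
          gcongr
          exact hf n

theorem summable_fkkTerm (hk : 2 ≤ k) (hf : ∀ n, ‖f n‖ ≤ B) (t : ℝ) :
    Summable (fkkTerm k f t) :=
  .of_norm_bounded ((Real.summable_one_div_nat_pow.2 (by omega)).mul_left B)
    fun n => (norm_fkkTerm_le hf t n).trans_eq (mul_one_div _ _).symm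

theorem tendsto_sum_Icc_fkk (hk : 2 ≤ k) (hf : ∀ n, ‖f n‖ ≤ B) (t : ℝ) :
    Tendsto (fun N => ∑ n ∈ Icc 1 N, fkkTerm k f t n) atTop (𝓝 (fkk k f t)) := by
  have hzero : fkkTerm k f t 0 = 0 := by simp [fkkTerm, zero_pow (by omega : k ≠ 0)]
  have hrange : ∀ N, ∑ n ∈ Icc 1 N, fkkTerm k f t n = ∑ n ∈ range (N + 1), fkkTerm k f t n := by
    intro N
    refine sum_subset (fun n hn => by simp at hn ⊢; omega) fun n hn hn' => ?_
    obtain rfl : n = 0 := by simp at hn hn'; omega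
    exact hzero
  simp only [hrange]
  exact ((summable_fkkTerm hk hf t).hasSum.tendsto_sum_nat).comp (tendsto_add_atTop_nat 1)

theorem norm_fkk_le (hk : 2 ≤ k) (hf : ∀ n, ‖f n‖ ≤ B) (t : ℝ) :
    ‖fkk k f t‖ ≤ B * ∑' n : ℕ, 1 / (n : ℝ) ^ k :=
  tsum_of_norm_bounded ((Real.summable_one_div_nat_pow.2 (by omega)).hasSum.mul_left B)
    fun n => (norm_fkkTerm_le hf t n).trans_eq (mul_one_div _ _).symm

theorem norm_fkk_sub_le (hk : 2 ≤ k) (hf : ∀ n, ‖f n‖ ≤ B) (s t : ℝ) {N : ℕ} (hN : 1 ≤ N) :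
    ‖fkk k f s - fkk k f t‖ ≤ (N + 1) * (2 * π * B * |s - t|) + 2 * B / (N : ℝ) ^ (k - 1) := by
  have hbound (n : ℕ) : ‖fkkTerm k f s n - fkkTerm k f t n‖ ≤ 2 * B * (1 / (n : ℝ) ^ k) :=
    calc ‖fkkTerm k f s n - fkkTerm k f t n‖ ≤ ‖fkkTerm k f s n‖ + ‖fkkTerm k f t n‖ :=
          norm_sub_le _ _
      _ ≤ B / (n : ℝ) ^ k + B / (n : ℝ) ^ k :=
          add_le_add (norm_fkkTerm_le hf s n) (norm_fkkTerm_le hf t n)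
      _ = 2 * B * (1 / (n : ℝ) ^ k) := by ring
  have hsum : Summable fun n => ‖fkkTerm k f s n - fkkTerm k f t n‖ :=
    ((Real.summable_one_div_nat_pow.2 (by omega)).mul_left (2 * B)).of_nonneg_of_le
      (fun _ => norm_nonneg _) hbound
  rw [fkk, fkk, ← (summable_fkkTerm hk hf s).tsum_sub (summable_fkkTerm hk hf t)]
  exact (norm_tsum_le_tsum_norm hsum).trans <| tsum_le_of_le_of_le_div_pow hk hN
    (fun _ => norm_nonneg _) (norm_fkkTerm_sub_le hf s t) fun n =>
      (hbound n).trans_eq (mul_one_div _ _)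

theorem exists_holder_fkk (hk : 2 ≤ k) (hf : ∀ n, ‖f n‖ ≤ B) :
    ∃ C, 0 < C ∧ ∀ s t, ‖fkk k f s - fkk k f t‖ ≤ C * |s - t| ^ (1 - 1 / (k : ℝ)) := by
  have hB : 0 ≤ B := (norm_nonneg _).trans (hf 0)
  set Z := ∑' n : ℕ, 1 / (n : ℝ) ^ k
  have hZ : 0 ≤ Z := tsum_nonneg fun _ => by positivity
  have hα : 0 < 1 - 1 / (k : ℝ) := by
    have : (2 : ℝ) ≤ k := by exact_mod_cast hk
    rw [sub_pos, div_lt_one (by positivity)]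
    linarith
  set C := 6 * π * B + 2 * B + 2 * B * Z + 1
  refine ⟨C, by positivity, fun s t => ?_⟩
  set α := 1 - 1 / (k : ℝ)
  rcases (abs_nonneg (s - t)).eq_or_lt with h0 | hpos
  · rw [← h0, Real.zero_rpow hα.ne', mul_zero, norm_le_zero_iff, sub_eq_zero,
      sub_eq_zero.1 (abs_eq_zero.1 h0.symm)]
  have hrpow : 0 ≤ |s - t| ^ α := by positivity
  rcases lt_or_ge |s - t| 1 with hlt | hge
  · obtain ⟨N, hN, hhead, htail⟩ := exists_nat_cutoff (k := k) (by omega) hpos hlt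
    calc ‖fkk k f s - fkk k f t‖
        ≤ (N + 1) * (2 * π * B * |s - t|) + 2 * B / (N : ℝ) ^ (k - 1) :=
          norm_fkk_sub_le hk hf s t hN
      _ = 2 * π * B * ((N + 1) * |s - t|) + 2 * B * (1 / (N : ℝ) ^ (k - 1)) := by ring
      _ ≤ 2 * π * B * (3 * |s - t| ^ α) + 2 * B * |s - t| ^ α := by
          gcongr 2 * π * B * ?_ + 2 * B * ?_
      _ ≤ C * |s - t| ^ α := by
          nlinarith [mul_nonneg (mul_nonneg hB hZ) hrpow]
  · calc ‖fkk k f s - fkk k f t‖ ≤ ‖fkk k f s‖ + ‖fkk k f t‖ := norm_sub_le _ _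
      _ ≤ B * Z + B * Z := add_le_add (norm_fkk_le hk hf s) (norm_fkk_le hk hf t)
      _ ≤ C * 1 := by nlinarith [Real.pi_pos]
      _ ≤ C * |s - t| ^ α := by
          gcongr
          exact Real.one_le_rpow hge hα.le

end

end Series

section Graph

open MeasureTheory Metric
open scoped ENNReal

theorem dimH_le_of_finset_covers {X : Type*} [EMetricSpace X] {s : Set X} {d K : ℝ} (hd : 0 ≤ d)
    {r : ℕ → ℝ} (hr0 : ∀ n, 0 ≤ r n) (hr : Tendsto r atTop (𝓝 0))
    (hcover : ∀ᶠ n in atTop, ∃ t : Finset (Set X), s ⊆ ⋃₀ ↑t ∧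
      (∀ u ∈ t, ediam u ≤ ENNReal.ofReal (r n)) ∧ t.card * r n ^ d ≤ K) :
    dimH s ≤ ENNReal.ofReal d := by
  borelize X
  obtain ⟨t, ht⟩ := hcover.choice
  have hsum : ∀ᶠ n in atTop, ∑ u : t n, ediam (u : Set X) ^ d ≤ ENNReal.ofReal K := by
    filter_upwards [ht] with n hn
    obtain ⟨-, hdiam, hcard⟩ := hn
    calc ∑ u : t n, ediam (u : Set X) ^ d ≤ ∑ _u : t n, ENNReal.ofReal (r n) ^ d :=
          sum_le_sum fun u _ => ENNReal.rpow_le_rpow (hdiam u u.2) hd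
      _ = ENNReal.ofReal ((t n).card * r n ^ d) := by
          rw [sum_const, card_univ, Fintype.card_coe, nsmul_eq_mul,
            ENNReal.ofReal_rpow_of_nonneg (hr0 n) hd, ENNReal.ofReal_mul (by positivity),
            ENNReal.ofReal_natCast]
      _ ≤ ENNReal.ofReal K := ENNReal.ofReal_le_ofReal hcard
  have hμ : μH[d] s ≤ ENNReal.ofReal K := by
    refine (Measure.hausdorffMeasure_le_liminf_sum d s (fun n => ENNReal.ofReal (r n))
      (by simpa using ENNReal.tendsto_ofReal hr) (fun n (u : t n) => (u : Set X)) ?_ ?_).trans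
      (liminf_le_of_frequently_le' hsum.frequently)
    · filter_upwards [ht] with n hn using fun u => hn.2.1 u u.2
    · filter_upwards [ht] with n hn
      simpa [Set.sUnion_eq_iUnion] using hn.1
  have hne : μH[(d.toNNReal : ℝ)] s ≠ ∞ := by
    rw [Real.coe_toNNReal d hd]
    exact ne_top_of_le_ne_top ENNReal.ofReal_ne_top hμ
  exact dimH_le_of_hausdorffMeasure_ne_top hne

theorem abs_sub_floor_mul_div_le {z : ℝ} (hz : 0 ≤ z) {n : ℕ} (hn : 0 < n) :
    |z - ⌊z * n⌋₊ / n| ≤ 1 / n := by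
  have hn' : (0 : ℝ) < n := by exact_mod_cast hn
  have h1 := Nat.floor_le (mul_nonneg hz hn'.le)
  have h2 := Nat.lt_floor_add_one (z * n)
  rw [show z - ⌊z * n⌋₊ / n = (z * n - ⌊z * n⌋₊) / n by field_simp, abs_div,
    abs_of_nonneg (sub_nonneg.2 h1), abs_of_pos hn']
  gcongr
  linarith

theorem graph_subset_biUnion_closedBall {g : ℝ → ℝ} {c α : ℝ} (hc : 0 ≤ c) (hα : 0 ≤ α)
    (hg : ∀ x ∈ Set.Icc (0 : ℝ) 1, ∀ y ∈ Set.Icc (0 : ℝ) 1, |g x - g y| ≤ c * |x - y| ^ α)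
    {n : ℕ} (hn : 0 < n) :
    {q : ℝ × ℝ | q.1 ∈ Set.Icc 0 1 ∧ q.2 = g q.1} ⊆
      ⋃ ij ∈ range (n + 1) ×ˢ range (⌊2 * c * (n : ℝ) ^ (1 - α)⌋₊ + 1),
        closedBall ((ij.1 / n : ℝ), g (ij.1 / n) - c * (1 / n : ℝ) ^ α + ij.2 / n) (1 / n) := by
  have hn' : (0 : ℝ) < n := by exact_mod_cast hn
  rintro ⟨x, y⟩ ⟨⟨hx0, hx1⟩, hy⟩
  simp only at hx0 hx1 hy
  subst hy
  set i := ⌊x * n⌋₊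
  have hi : i ≤ n := Nat.floor_le_of_le (by nlinarith)
  have hxi := abs_sub_floor_mul_div_le hx0 hn
  have hi01 : (i / n : ℝ) ∈ Set.Icc 0 1 :=
    ⟨by positivity, div_le_one_of_le₀ (by exact_mod_cast hi) hn'.le⟩
  have hgi : |g x - g (i / n)| ≤ c * (1 / n : ℝ) ^ α :=
    (hg x ⟨hx0, hx1⟩ _ hi01).trans (by gcongr)
  set z := g x - (g (i / n) - c * (1 / n : ℝ) ^ α)
  have hz0 : 0 ≤ z := by linarith [(abs_le.1 hgi).1]
  set j := ⌊z * n⌋₊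
  have hj : j ≤ ⌊2 * c * (n : ℝ) ^ (1 - α)⌋₊ := by
    refine Nat.floor_le_floor ?_
    calc z * n ≤ 2 * c * (1 / n : ℝ) ^ α * n := by gcongr; linarith [(abs_le.1 hgi).2]
      _ = 2 * c * (n : ℝ) ^ (1 - α) := by
        rw [Real.rpow_sub hn', Real.rpow_one, one_div, Real.inv_rpow hn'.le]
        field_simp
  refine Set.mem_biUnion (x := (i, j)) (by simp; omega) ?_
  rw [mem_closedBall, Prod.dist_eq, max_le_iff, Real.dist_eq, Real.dist_eq]
  refine ⟨hxi, ?_⟩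
  have hzj : g x - (g (i / n) - c * (1 / n : ℝ) ^ α + j / n) = z - j / n := by ring
  exact hzj ▸ abs_sub_floor_mul_div_le hz0 hn

theorem card_grid_mul_rpow_le {c α : ℝ} (hc : 0 ≤ c) (hα0 : 0 ≤ α) (hα1 : α ≤ 1) {n : ℕ}
    (hn : 0 < n) :
    ((n + 1) * (⌊2 * c * (n : ℝ) ^ (1 - α)⌋₊ + 1) : ℝ) * (2 / n : ℝ) ^ (2 - α) ≤
      8 * (2 * c + 1) := by
  have hn' : (1 : ℝ) ≤ n := by exact_mod_cast hn
  have hpow : (1 : ℝ) ≤ (n : ℝ) ^ (1 - α) := Real.one_le_rpow hn' (by linarith)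
  have hrows : (⌊2 * c * (n : ℝ) ^ (1 - α)⌋₊ + 1 : ℝ) ≤ (2 * c + 1) * (n : ℝ) ^ (1 - α) := by
    have := Nat.floor_le (show 0 ≤ 2 * c * (n : ℝ) ^ (1 - α) by positivity)
    nlinarith
  have hscale : (2 / n : ℝ) ^ (2 - α) ≤ 4 / (n : ℝ) ^ (2 - α) := by
    rw [Real.div_rpow zero_le_two (by positivity)]
    gcongr
    calc (2 : ℝ) ^ (2 - α) ≤ 2 ^ (2 : ℝ) :=
          Real.rpow_le_rpow_of_exponent_le one_le_two (by linarith)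
      _ = 4 := by norm_num
  have hexp : (n : ℝ) * (n : ℝ) ^ (1 - α) = (n : ℝ) ^ (2 - α) := by
    rw [← Real.rpow_one_add' (by positivity) (by linarith)]
    ring_nf
  calc ((n + 1) * (⌊2 * c * (n : ℝ) ^ (1 - α)⌋₊ + 1) : ℝ) * (2 / n : ℝ) ^ (2 - α)
      ≤ (2 * n) * ((2 * c + 1) * (n : ℝ) ^ (1 - α)) * (4 / (n : ℝ) ^ (2 - α)) := by
        gcongr
        linarith
    _ = 8 * (2 * c + 1) := by
        rw [mul_mul_mul_comm, hexp]
        field_simp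
        ring

theorem dimH_graph_le_of_holder {g : ℝ → ℝ} {c α : ℝ} (hα0 : 0 ≤ α) (hα1 : α ≤ 1)
    (hg : ∀ x ∈ Set.Icc (0 : ℝ) 1, ∀ y ∈ Set.Icc (0 : ℝ) 1, |g x - g y| ≤ c * |x - y| ^ α) :
    dimH {q : ℝ × ℝ | q.1 ∈ Set.Icc 0 1 ∧ q.2 = g q.1} ≤ ENNReal.ofReal (2 - α) := by
  have hc : 0 ≤ c := by
    simpa using (abs_nonneg _).trans (hg 0 ⟨le_rfl, zero_le_one⟩ 1 ⟨zero_le_one, le_rfl⟩)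
  refine dimH_le_of_finset_covers (K := 8 * (2 * c + 1)) (by linarith) (fun n => by positivity)
    (tendsto_const_div_atTop_nhds_zero_nat 2) ?_
  filter_upwards [eventually_gt_atTop 0] with n hn
  refine ⟨(range (n + 1) ×ˢ range (⌊2 * c * (n : ℝ) ^ (1 - α)⌋₊ + 1)).image fun ij =>
    closedBall ((ij.1 / n : ℝ), g (ij.1 / n) - c * (1 / n : ℝ) ^ α + ij.2 / n) (1 / n), ?_, ?_, ?_⟩
  · simpa [Set.sUnion_image] using graph_subset_biUnion_closedBall hc hα0 hg hn
  · simp only [mem_image]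
    rintro _ ⟨ij, -, rfl⟩
    rw [← closedEBall_ofReal (by positivity)]
    refine ediam_closedEBall_le.trans_eq ?_
    rw [← ENNReal.ofReal_ofNat 2, ← ENNReal.ofReal_mul zero_le_two]
    ring_nf
  · refine le_trans ?_ (card_grid_mul_rpow_le hc hα0 hα1 hn)
    gcongr
    refine (Nat.cast_le.2 card_image_le).trans ?_
    simp

end Graph

/-- For an integer `k ≥ 2` and bounded `f : ℕ → ℂ`, the series
`F_{k,k}(f;t) = ∑ f(n) e^{2πi n^k t}/n^k` converges, is Hölder continuous with exponent
`1 − 1/k`, and the Hausdorff dimensions of the graphs of its absolute value, real part,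
and imaginary part over `[0,1]` are each at most `1 + 1/k`. -/
theorem stmt_19 (k : ℕ) (hk : 2 ≤ k) (f : ℕ → ℂ) (B : ℝ)
    (hf : ∀ n : ℕ, ‖f n‖ ≤ B) :
    ∃ F : ℝ → ℂ,
      (∀ t : ℝ, Tendsto (fun N : ℕ => ∑ n ∈ Finset.Icc 1 N,
          f n * Complex.exp (2 * Real.pi * Complex.I * ((n : ℂ) ^ k) * (t : ℂ)) / ((n : ℂ) ^ k))
        atTop (𝓝 (F t))) ∧
      (∃ C₁ : ℝ, 0 < C₁ ∧
        ∀ s t : ℝ, ‖F s - F t‖ ≤ C₁ * |s - t| ^ (1 - 1 / (k : ℝ))) ∧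
      dimH {q : ℝ × ℝ | q.1 ∈ Set.Icc (0 : ℝ) 1 ∧ q.2 = ‖F q.1‖}
          ≤ ENNReal.ofReal (1 + 1 / (k : ℝ)) ∧
      dimH {q : ℝ × ℝ | q.1 ∈ Set.Icc (0 : ℝ) 1 ∧ q.2 = (F q.1).re}
          ≤ ENNReal.ofReal (1 + 1 / (k : ℝ)) ∧
      dimH {q : ℝ × ℝ | q.1 ∈ Set.Icc (0 : ℝ) 1 ∧ q.2 = (F q.1).im}
          ≤ ENNReal.ofReal (1 + 1 / (k : ℝ)) := by
  obtain ⟨C, hC, hholder⟩ := exists_holder_fkk hk hf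
  have hk' : (1 : ℝ) ≤ k := by exact_mod_cast (by omega : 1 ≤ k)
  have hα0 : 0 ≤ 1 - 1 / (k : ℝ) := sub_nonneg.2 (div_le_one_of_le₀ hk' (by positivity))
  have hα1 : 1 - 1 / (k : ℝ) ≤ 1 := sub_le_self _ (by positivity)
  have hgraph (φ : ℂ → ℝ) (hφ : ∀ z w, |φ z - φ w| ≤ ‖z - w‖) :
      dimH {q : ℝ × ℝ | q.1 ∈ Set.Icc (0 : ℝ) 1 ∧ q.2 = φ (fkk k f q.1)}
        ≤ ENNReal.ofReal (1 + 1 / (k : ℝ)) := by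
    rw [show 1 + 1 / (k : ℝ) = 2 - (1 - 1 / (k : ℝ)) by ring]
    exact dimH_graph_le_of_holder hα0 hα1 fun x _ y _ => (hφ _ _).trans (hholder x y)
  exact ⟨fkk k f, tendsto_sum_Icc_fkk hk hf, ⟨C, hC, hholder⟩,
    hgraph (‖·‖) abs_norm_sub_norm_le,
    hgraph Complex.re fun z w => by simpa using Complex.abs_re_le_norm (z - w),
    hgraph Complex.im fun z w => by simpa using Complex.abs_im_le_norm (z - w)⟩
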